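/- arXiv:2201.12850 — 2 statements merged into one kernel-verified Lean document; each statement's English description precedes it below -/
import Mathlib

section
/- If G is a stepwise transmission irregular (STI) graph of order n ≥ 5, then 2 ≤ diam(G) ≤ (n − 1)/2; moreover, diam(G) = 2 if and only if G is isomorphic to K_{(n−1)/2,(n+1)/2}, and the hatted cycle G_n satisfies diam(G_n) = (n − 1)/2. -/
open Finset

variable {V : Type*}

/-- The transmission of a vertex `v`: the sum of distances from `v` to all vertices. -/
noncomputable def transmission [Fintype V] (G : SimpleGraph V) (v : V) : ℕ :=
  ∑ u, G.dist v u

/-- A connected graph is stepwise transmission irregular (STI) if the transmissions of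
the endpoints of every edge differ by exactly one. -/
def IsSTI [Fintype V] (G : SimpleGraph V) : Prop :=
  G.Connected ∧ ∀ u v : V, G.Adj u v →
    ((transmission G u : ℤ) - (transmission G v : ℤ)).natAbs = 1

/-- The hatted cycle `G_n` on vertices `0, …, n-1` (paper's `v_1, …, v_n`):
vertices `0, …, n-2` induce a cycle of length `n-1`, and vertex `n-1`
is adjacent exactly to vertices `0` and `2`. -/
def hattedCycle (n : ℕ) : SimpleGraph (Fin n) :=
  SimpleGraph.fromRel (fun i j =>
    (j.val = i.val + 1 ∧ j.val ≤ n - 2) ∨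
    (i.val = 0 ∧ j.val = n - 2) ∨
    (i.val = n - 1 ∧ (j.val = 0 ∨ j.val = 2)))

/-- The diameter of a graph: the maximum distance between pairs of vertices. -/
noncomputable def graphDiam [Fintype V] (G : SimpleGraph V) : ℕ :=
  Finset.univ.sup fun v => Finset.univ.sup fun u => G.dist v u

/-!
For an edge `uv` let `n_u(uv)` be the number of vertices strictly closer to `u` than to `v`.
Summing `d(x,u) - d(x,v)` over all `x` gives `Tr(u) - Tr(v) = n_v(uv) - n_u(uv)`. In an STI graph
the parities of the transmissions form a proper 2-colouring, so no vertex is equidistant from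
the ends of an edge: `n_u + n_v = n` and `|n_u - n_v| = 1`, whence `n` is odd and
`2 n_u ≤ n + 1`.

Let `u = x₀, x₁, …, x_d = w` be a geodesic. All of `x₁, …, x_d` are closer to `x₁` than to `u`,
so `2d ≤ n + 1`. If `2d = n + 1` they are exactly the vertices closer to `x₁`, and symmetrically
`x₀, …, x_{d-1}` are exactly those closer to `x_{d-1}` than to `w`. The vertices closer to `u`
than to `x₁` number `d - 1 ≥ 2` and are geodesically convex towards `u`, so one of them is a
neighbour `z` of `u`. It lies off the geodesic, hence is closer to `w` than to `x_{d-1}`; those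
vertices number `d - 1` and are convex towards `w`, so `d(z,w) < d - 1`, contradicting
`d(u,w) = d`.

If `diam G = 2`, the 2-colouring makes `G` complete bipartite, and `|n_u - n_v| = 1` for an edge
`uv` says that the two colour classes differ in size by one.
-/

open SimpleGraph

namespace SimpleGraph

variable {G : SimpleGraph V} {u v w x y a b : V}

theorem Walk.dist_add_dist_le_length (p : G.Walk u v) (hx : x ∈ p.support) :
    G.dist u x + G.dist x v ≤ p.length := by
  classical
  calc G.dist u x + G.dist x v ≤ (p.takeUntil x hx).length + (p.dropUntil x hx).length :=
        add_le_add (dist_le _) (dist_le _)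
    _ = p.length := by rw [← Walk.length_append, Walk.take_spec]

theorem Walk.IsPath.card_support_toFinset [DecidableEq V] {p : G.Walk u v} (hp : p.IsPath) :
    #p.support.toFinset = p.length + 1 := by
  rw [List.toFinset_card_of_nodup hp.support_nodup, p.length_support]

theorem Walk.card_support_toFinset_erase_eq_dist [DecidableEq V] (p : G.Walk u v)
    (hp : p.length = G.dist u v) : #(p.support.toFinset.erase u) = G.dist u v := by
  rw [card_erase_of_mem (by simp), (p.isPath_of_length_eq_dist hp).card_support_toFinset, hp]
  simp

theorem abs_sub_le_dist (f : V → ℤ) (hf : ∀ x y, G.Adj x y → |f x - f y| ≤ 1)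
    (hr : G.Reachable x y) : |f x - f y| ≤ G.dist x y := by
  obtain ⟨p, hp⟩ := hr.exists_walk_length_eq_dist
  rw [← hp]
  clear hp hr
  induction p with
  | nil => simp
  | @cons a b c h p ih =>
    rw [Walk.length_cons, Nat.cast_succ]
    exact (abs_sub_le (f a) (f b) (f c)).trans (by linarith [hf a b h])

theorem Hom.edist_map_le {W : Type*} {H : SimpleGraph W} (f : G →g H) (x y : V) :
    H.edist (f x) (f y) ≤ G.edist x y := by
  by_cases hr : G.Reachable x y
  · obtain ⟨p, hp⟩ := hr.exists_walk_length_eq_edist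
    rw [← hp, ← p.length_map f]
    exact edist_le _
  · simp [edist_eq_top_of_not_reachable hr]

theorem Iso.dist_map {W : Type*} {H : SimpleGraph W} (e : G ≃g H) (x y : V) :
    H.dist (e x) (e y) = G.dist x y := by
  have hle := Hom.edist_map_le e.toHom x y
  have hge := Hom.edist_map_le e.symm.toHom (e x) (e y)
  simp only [RelIso.coe_toRelEmbedding, RelEmbedding.coe_toRelHom, RelIso.symm_apply_apply]
    at hle hge
  rw [dist, dist, le_antisymm hle hge]

def isoCompleteBipartiteGraphOfAdjIff (P : V → Prop) [DecidablePred P]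
    (h : ∀ x y, G.Adj x y ↔ (P x ↔ ¬P y)) :
    G ≃g completeBipartiteGraph {x // P x} {x // ¬P x} where
  toEquiv := (Equiv.sumCompl P).symm
  map_rel_iff' {x y} := by
    rw [h]
    by_cases hx : P x <;> by_cases hy : P y <;>
      simp [Equiv.sumCompl_symm_apply_of_pos, Equiv.sumCompl_symm_apply_of_neg, hx, hy]

noncomputable def closerSet [Fintype V] (G : SimpleGraph V) (a b : V) : Finset V :=
  {x | G.dist x a < G.dist x b}

variable [Fintype V]

@[simp]
theorem mem_closerSet : x ∈ G.closerSet a b ↔ G.dist x a < G.dist x b := by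
  simp [closerSet]

theorem support_subset_closerSet (hG : G.Connected) (p : G.Walk y a)
    (hp : p.length = G.dist y a) (hy : y ∈ G.closerSet a b) :
    ∀ x ∈ p.support, x ∈ G.closerSet a b := by
  intro x hx
  have hsplit := p.dist_add_dist_le_length hx
  have htri : G.dist y b ≤ G.dist y x + G.dist x b := hG.dist_triangle
  rw [mem_closerSet] at hy ⊢
  omega

theorem dist_lt_card_closerSet (hG : G.Connected) (hy : y ∈ G.closerSet a b) :
    G.dist y a < #(G.closerSet a b) := by
  classical
  obtain ⟨p, hpath, hp⟩ := hG.exists_path_of_dist y a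
  calc G.dist y a < #p.support.toFinset := by
        rw [hpath.card_support_toFinset, hp]
        omega
    _ ≤ _ := card_le_card fun x hx ↦
        support_subset_closerSet hG p hp hy x (List.mem_toFinset.mp hx)

theorem exists_adj_mem_closerSet (hG : G.Connected) (hy : y ∈ G.closerSet a b) (hya : y ≠ a) :
    ∃ z, G.Adj z a ∧ z ∈ G.closerSet a b := by
  obtain ⟨p, hp⟩ := hG.exists_walk_length_eq_dist y a
  exact ⟨p.penultimate, Walk.adj_penultimate (Walk.not_nil_of_ne hya),
    support_subset_closerSet hG p hp hy _ (p.getVert_mem_support _)⟩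

theorem Walk.support_toFinset_erase_subset_closerSet_snd [DecidableEq V] (hG : G.Connected)
    (p : G.Walk u w) (hp : p.length = G.dist u w) :
    p.support.toFinset.erase u ⊆ G.closerSet p.snd u := by
  intro x hx
  obtain ⟨hxu, hx⟩ := mem_erase.mp hx
  have hnil : ¬p.Nil := fun h => hxu (by simpa [Walk.nil_iff_support_eq.mp h] using hx)
  have hxt : x ∈ p.tail.support := by
    rw [← Walk.cons_support_tail hnil, List.toFinset_cons, mem_insert] at hx
    exact List.mem_toFinset.mp (hx.resolve_left hxu)
  have htail := p.tail.dist_add_dist_le_length hxt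
  have hlen := Walk.length_tail_add_one hnil
  have htri : G.dist u w ≤ G.dist u x + G.dist x w := hG.dist_triangle
  rw [mem_closerSet, dist_comm (u := x), dist_comm (u := x)]
  omega

end SimpleGraph

section Diameter

variable [Fintype V] {G : SimpleGraph V}

theorem graphDiam_le_iff {k : ℕ} : graphDiam G ≤ k ↔ ∀ u v, G.dist u v ≤ k := by
  simp [graphDiam]

theorem dist_le_graphDiam (u v : V) : G.dist u v ≤ graphDiam G :=
  graphDiam_le_iff.mp le_rfl u v

theorem exists_dist_eq_graphDiam [Nonempty V] : ∃ u v, G.dist u v = graphDiam G := by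
  obtain ⟨u, -, hu⟩ := exists_mem_eq_sup univ univ_nonempty
    fun v => univ.sup fun w => G.dist v w
  obtain ⟨v, -, hv⟩ := exists_mem_eq_sup univ univ_nonempty (G.dist u)
  exact ⟨u, v, by rw [graphDiam, hu, hv]⟩

theorem SimpleGraph.Iso.graphDiam_eq {W : Type*} [Fintype W] {H : SimpleGraph W} (e : G ≃g H) :
    graphDiam G = graphDiam H := by
  refine le_antisymm (graphDiam_le_iff.mpr fun u v => ?_) (graphDiam_le_iff.mpr fun u v => ?_)
  · rw [← e.dist_map]
    exact dist_le_graphDiam _ _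
  · rw [← e.symm.dist_map]
    exact dist_le_graphDiam _ _

theorem graphDiam_completeBipartiteGraph_le_two {W : Type*} [Fintype W] [Nonempty V]
    [Nonempty W] : graphDiam (completeBipartiteGraph V W) ≤ 2 := by
  obtain ⟨v₀⟩ := ‹Nonempty V›
  obtain ⟨w₀⟩ := ‹Nonempty W›
  have hadj : ∀ x y, (completeBipartiteGraph V W).Adj x y →
      (completeBipartiteGraph V W).dist x y ≤ 2 :=
    fun x y h => (dist_eq_one_iff_adj.mpr h).trans_le one_le_two
  have hpath : ∀ x m y, (completeBipartiteGraph V W).Adj x m →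
      (completeBipartiteGraph V W).Adj m y → (completeBipartiteGraph V W).dist x y ≤ 2 :=
    fun x m y h₁ h₂ => dist_le (.cons h₁ (.cons h₂ .nil))
  refine graphDiam_le_iff.mpr ?_
  rintro (a | a) (b | b)
  · exact hpath _ (.inr w₀) _ (by simp) (by simp)
  · exact hadj _ _ (by simp)
  · exact hadj _ _ (by simp)
  · exact hpath _ (.inl v₀) _ (by simp) (by simp)

end Diameter

theorem transmission_sub_transmission_of_adj [Fintype V] {G : SimpleGraph V} {u v : V}
    (h : G.Adj u v) :
    (transmission G u : ℤ) - transmission G v = #(G.closerSet v u) - #(G.closerSet u v) := by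
  have hterm : ∀ x, (G.dist u x : ℤ) - G.dist v x =
      (if G.dist x v < G.dist x u then 1 else 0) - (if G.dist x u < G.dist x v then 1 else 0) := by
    intro x
    rw [dist_comm (u := u), dist_comm (u := v)]
    rcases h.diff_dist_adj (u := x) with h' | h' | h' <;> split_ifs <;> omega
  simp only [transmission, closerSet, card_filter]
  push_cast
  rw [← sum_sub_distrib, ← sum_sub_distrib]
  exact sum_congr rfl fun x _ => hterm x

namespace IsSTI

variable [Fintype V] {G : SimpleGraph V} {u v w x : V}

noncomputable def coloring (hG : IsSTI G) : G.Coloring Bool :=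
  Coloring.mk (fun v => decide (Even (transmission G v))) fun {u v} h => by
    have hodd : ¬Even (transmission G u + transmission G v) := by
      have := hG.2 u v h
      rw [Nat.even_iff]
      omega
    rw [Nat.even_add] at hodd
    simpa [decide_eq_decide] using hodd

theorem even_dist_iff (hG : IsSTI G) (x y : V) :
    Even (G.dist x y) ↔ (hG.coloring x ↔ hG.coloring y) := by
  obtain ⟨p, hp⟩ := hG.1.exists_walk_length_eq_dist x y
  rw [← hp]
  exact hG.coloring.even_length_iff_congr p

theorem dist_ne_of_adj (hG : IsSTI G) (h : G.Adj u v) (x : V) : G.dist x u ≠ G.dist x v := by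
  intro heq
  have hu := hG.even_dist_iff x u
  have hv := hG.even_dist_iff x v
  rw [heq] at hu
  exact hG.coloring.valid h (Bool.eq_iff_iff.mpr (by tauto))

theorem not_mem_closerSet_iff (hG : IsSTI G) (h : G.Adj u v) :
    x ∉ G.closerSet u v ↔ x ∈ G.closerSet v u := by
  have := hG.dist_ne_of_adj h x
  simp only [mem_closerSet]
  omega

theorem card_closerSet_add_card_closerSet (hG : IsSTI G) (h : G.Adj u v) :
    #(G.closerSet u v) + #(G.closerSet v u) = Fintype.card V := by
  classical
  rw [← card_add_card_compl (G.closerSet u v)]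
  congr 2
  ext x
  rw [mem_compl, hG.not_mem_closerSet_iff h]

theorem card_closerSet_sub_card_closerSet (hG : IsSTI G) (h : G.Adj u v) :
    ((#(G.closerSet v u) : ℤ) - #(G.closerSet u v)).natAbs = 1 := by
  rw [← transmission_sub_transmission_of_adj h]
  exact hG.2 u v h

theorem two_mul_card_closerSet_le (hG : IsSTI G) (h : G.Adj u v) :
    2 * #(G.closerSet u v) ≤ Fintype.card V + 1 := by
  have := hG.card_closerSet_add_card_closerSet h
  have := hG.card_closerSet_sub_card_closerSet h
  omega

theorem odd_card [Nontrivial V] (hG : IsSTI G) : Odd (Fintype.card V) := by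
  obtain ⟨u⟩ : Nonempty V := inferInstance
  obtain ⟨v, h⟩ := hG.1.preconnected.exists_adj_of_nontrivial u
  have := hG.card_closerSet_add_card_closerSet h
  rcases Int.natAbs_eq_iff.mp (hG.card_closerSet_sub_card_closerSet h) with h' | h'
  · exact ⟨#(G.closerSet u v), by omega⟩
  · exact ⟨#(G.closerSet v u), by omega⟩

theorem two_le_graphDiam (hG : IsSTI G) (h3 : 2 < Fintype.card V) : 2 ≤ graphDiam G := by
  by_contra! hlt
  have hadj : ∀ x y, x ≠ y → G.Adj x y := fun x y hxy =>
    dist_eq_one_iff_adj.mp <|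
      le_antisymm ((dist_le_graphDiam x y).trans (by omega)) (hG.1.pos_dist_of_ne hxy)
  obtain ⟨a, b, c, hab, hac, hbc⟩ := Fintype.two_lt_card_iff.mp h3
  have h₁ := hG.coloring.valid (hadj a b hab)
  have h₂ := hG.coloring.valid (hadj a c hac)
  have h₃ := hG.coloring.valid (hadj b c hbc)
  revert h₁ h₂ h₃
  cases hG.coloring a <;> cases hG.coloring b <;> cases hG.coloring c <;> decide

theorem two_mul_dist_le_card_add_one (hG : IsSTI G) (u w : V) :
    2 * G.dist u w ≤ Fintype.card V + 1 := by
  classical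
  obtain ⟨p, hp⟩ := hG.1.exists_walk_length_eq_dist u w
  rcases Nat.eq_zero_or_pos (G.dist u w) with h0 | hpos
  · omega
  have hnil : ¬p.Nil := by rw [← Walk.length_eq_zero_iff]; omega
  have := card_le_card (p.support_toFinset_erase_subset_closerSet_snd hG.1 hp)
  have := hG.two_mul_card_closerSet_le (p.adj_snd hnil).symm
  rw [p.card_support_toFinset_erase_eq_dist hp] at *
  omega

theorem closerSet_snd_eq [DecidableEq V] (hG : IsSTI G) (p : G.Walk u w)
    (hp : p.length = G.dist u w) (h : 2 * G.dist u w = Fintype.card V + 1) :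
    G.closerSet p.snd u = p.support.toFinset.erase u := by
  have hnil : ¬p.Nil := by rw [← Walk.length_eq_zero_iff]; omega
  have hsub := p.support_toFinset_erase_subset_closerSet_snd hG.1 hp
  have := hG.two_mul_card_closerSet_le (p.adj_snd hnil).symm
  refine (eq_of_subset_of_card_le hsub ?_).symm
  rw [p.card_support_toFinset_erase_eq_dist hp]
  omega

theorem two_mul_dist_le (hG : IsSTI G) (h5 : 5 ≤ Fintype.card V) (u w : V) :
    2 * G.dist u w ≤ Fintype.card V - 1 := by
  classical
  have : Nontrivial V := Fintype.one_lt_card_iff_nontrivial.mp (by omega)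
  obtain ⟨k, hk⟩ := hG.odd_card
  have hle := hG.two_mul_dist_le_card_add_one u w
  by_contra! hcon
  have hd : 2 * G.dist u w = Fintype.card V + 1 := by omega
  obtain ⟨p, hp⟩ := hG.1.exists_walk_length_eq_dist u w
  have hrev : p.reverse.length = G.dist w u := by simp [hp, dist_comm]
  have hnil : ¬p.Nil := by rw [← Walk.length_eq_zero_iff]; omega
  have hnil' : ¬p.reverse.Nil := by simpa using hnil
  have hu := hG.closerSet_snd_eq p hp hd
  have hw := hG.closerSet_snd_eq p.reverse hrev (by rwa [dist_comm])
  have hcard_u := hG.card_closerSet_add_card_closerSet (p.adj_snd hnil)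
  have hcard_w := hG.card_closerSet_add_card_closerSet (p.reverse.adj_snd hnil')
  rw [hu, p.card_support_toFinset_erase_eq_dist hp] at hcard_u
  rw [hw, p.reverse.card_support_toFinset_erase_eq_dist hrev, dist_comm] at hcard_w
  obtain ⟨y, hy, hyu⟩ := exists_mem_ne (by omega : 1 < #(G.closerSet u p.snd)) u
  obtain ⟨z, hzu, hz⟩ := exists_adj_mem_closerSet hG.1 hy hyu
  have hzp : z ∉ p.support := fun hzp =>
    (hG.not_mem_closerSet_iff (p.adj_snd hnil).symm).mpr hz
      (hu ▸ mem_erase.mpr ⟨hzu.ne, List.mem_toFinset.mpr hzp⟩)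
  have hzw : z ∈ G.closerSet w p.reverse.snd :=
    (hG.not_mem_closerSet_iff (p.reverse.adj_snd hnil').symm).mp
      (hw ▸ fun h => hzp (by simpa using mem_of_mem_erase h))
  have hlt := dist_lt_card_closerSet hG.1 hzw
  have htri : G.dist u w ≤ G.dist u z + G.dist z w := hG.1.dist_triangle
  rw [dist_eq_one_iff_adj.mpr hzu.symm] at htri
  omega

theorem two_mul_graphDiam_le (hG : IsSTI G) (h5 : 5 ≤ Fintype.card V) :
    2 * graphDiam G ≤ Fintype.card V - 1 := by
  have : Nonempty V := Fintype.card_pos_iff.mp (by omega)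
  obtain ⟨u, w, huw⟩ := exists_dist_eq_graphDiam (G := G)
  exact huw ▸ hG.two_mul_dist_le h5 u w

theorem adj_iff_of_graphDiam_le_two (hG : IsSTI G) (hd : graphDiam G ≤ 2) (x y : V) :
    G.Adj x y ↔ hG.coloring x ≠ hG.coloring y := by
  refine ⟨hG.coloring.valid, fun hxy => ?_⟩
  have hodd : ¬Even (G.dist x y) := by
    rw [hG.even_dist_iff]
    exact fun h => hxy (Bool.eq_iff_iff.mpr h)
  have hpos := hG.1.pos_dist_of_ne fun h => hxy (congrArg _ h)
  have hle := (dist_le_graphDiam x y).trans hd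
  rw [Nat.even_iff] at hodd
  exact dist_eq_one_iff_adj.mp (by omega)

theorem card_closerSet_le_of_graphDiam_le_two (hG : IsSTI G) (hd : graphDiam G ≤ 2)
    (h : G.Adj u v) : #(G.closerSet u v) ≤ #{x | hG.coloring x = hG.coloring v} := by
  classical
  have hsub : G.closerSet u v ⊆
      insert u (({x | hG.coloring x = hG.coloring v} : Finset V).erase v) := by
    intro x hx
    rw [mem_closerSet] at hx
    rw [mem_insert, mem_erase, mem_filter]
    by_cases hxu : x = u
    · exact Or.inl hxu
    have hxv : x ≠ v := by
      rintro rfl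
      simp [dist_eq_one_iff_adj.mpr h.symm] at hx
    have hpos := hG.1.pos_dist_of_ne hxu
    have hle := (dist_le_graphDiam x v).trans hd
    have hcu := hG.coloring.valid (dist_eq_one_iff_adj.mp (by omega) : G.Adj x u)
    have hcv := hG.coloring.valid h
    refine Or.inr ⟨hxv, mem_univ x, ?_⟩
    revert hcu hcv
    cases hG.coloring x <;> cases hG.coloring u <;> cases hG.coloring v <;> decide
  refine (card_le_card hsub).trans ((card_insert_le _ _).trans ?_)
  rw [card_erase_add_one (by simp)]

theorem exists_two_mul_card_add_one_of_graphDiam_le_two [Nontrivial V] (hG : IsSTI G)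
    (hd : graphDiam G ≤ 2) : ∃ b : Bool, 2 * #{x | hG.coloring x = b} + 1 = Fintype.card V := by
  obtain ⟨u⟩ : Nonempty V := inferInstance
  obtain ⟨v, h⟩ := hG.1.preconnected.exists_adj_of_nontrivial u
  have hclasses : #{x | hG.coloring x = hG.coloring u} + #{x | hG.coloring x = hG.coloring v} =
      Fintype.card V := by
    rw [← card_univ, ← card_filter_add_card_filter_not
      (s := univ) (fun x => hG.coloring x = hG.coloring u)]
    congr 2
    ext x
    have := hG.coloring.valid h
    simp only [mem_filter, mem_univ, true_and]
    revert this
    generalize hG.coloring x = p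
    generalize hG.coloring u = q
    generalize hG.coloring v = r
    cases p <;> cases q <;> cases r <;> decide
  have h₁ := hG.card_closerSet_le_of_graphDiam_le_two hd h
  have h₂ := hG.card_closerSet_le_of_graphDiam_le_two hd h.symm
  have hsum := hG.card_closerSet_add_card_closerSet h
  rcases Int.natAbs_eq_iff.mp (hG.card_closerSet_sub_card_closerSet h) with h' | h'
  · exact ⟨hG.coloring v, by omega⟩
  · exact ⟨hG.coloring u, by omega⟩

theorem nonempty_iso_of_graphDiam_eq_two [Nontrivial V] (hG : IsSTI G) (hd : graphDiam G = 2) :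
    Nonempty (G ≃g completeBipartiteGraph (Fin ((Fintype.card V - 1) / 2))
      (Fin ((Fintype.card V + 1) / 2))) := by
  classical
  obtain ⟨b, hb⟩ := hG.exists_two_mul_card_add_one_of_graphDiam_le_two hd.le
  let P : V → Prop := fun x => hG.coloring x = b
  have hP : ∀ x y, G.Adj x y ↔ (P x ↔ ¬P y) := by
    intro x y
    rw [hG.adj_iff_of_graphDiam_le_two hd.le]
    simp only [P]
    generalize hG.coloring x = p
    generalize hG.coloring y = q
    cases p <;> cases q <;> cases b <;> decide
  have hcardP : Fintype.card {x // P x} = (Fintype.card V - 1) / 2 := by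
    rw [Fintype.card_subtype]
    change #{x | hG.coloring x = b} = _
    omega
  have hcardNP : Fintype.card {x // ¬P x} = (Fintype.card V + 1) / 2 := by
    rw [Fintype.card_subtype_compl, hcardP]
    omega
  exact ⟨(isoCompleteBipartiteGraphOfAdjIff P hP).trans <|
    completeBipartiteGraphCongr (Fintype.equivFinOfCardEq hcardP)
      (Fintype.equivFinOfCardEq hcardNP)⟩

end IsSTI

section HattedCycle

variable {n : ℕ}

theorem hattedCycle_adj_iff {i j : Fin n} : (hattedCycle n).Adj i j ↔ i ≠ j ∧
    ((j.val = i.val + 1 ∧ j.val ≤ n - 2) ∨ (i.val = 0 ∧ j.val = n - 2) ∨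
      (i.val = n - 1 ∧ (j.val = 0 ∨ j.val = 2)) ∨
    (i.val = j.val + 1 ∧ i.val ≤ n - 2) ∨ (j.val = 0 ∧ i.val = n - 2) ∨
      (j.val = n - 1 ∧ (i.val = 0 ∨ i.val = 2))) := by
  simp only [hattedCycle, fromRel_adj]
  tauto

theorem hattedCycle_dist_eq_one (h5 : 5 ≤ n) {i j : Fin n}
    (h : (i.val = 0 ∧ j.val = n - 2) ∨ (i.val = n - 1 ∧ (j.val = 0 ∨ j.val = 2))) :
    (hattedCycle n).dist i j = 1 :=
  dist_eq_one_iff_adj.mpr (hattedCycle_adj_iff.mpr ⟨fun he => by subst he; omega, by omega⟩)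

theorem hattedCycle_exists_walk (i j : Fin n) (hij : i ≤ j) (hj : j.val ≤ n - 2) :
    ∃ p : (hattedCycle n).Walk i j, p.length = j.val - i.val := by
  obtain ⟨m, hm⟩ : ∃ m, j.val = i.val + m := ⟨j.val - i.val, by omega⟩
  induction m generalizing j with
  | zero => exact ⟨Walk.nil.copy rfl (Fin.ext (by omega)), by simp; omega⟩
  | succ m ih =>
    obtain ⟨p, hp⟩ := ih ⟨j.val - 1, by omega⟩ (Fin.le_def.mpr (by simp; omega)) (by simp; omega)
      (by simp; omega)
    have hadj : (hattedCycle n).Adj ⟨j.val - 1, by omega⟩ j :=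
      hattedCycle_adj_iff.mpr ⟨fun h => by simp [Fin.ext_iff] at h; omega, by simp; omega⟩
    exact ⟨p.concat hadj, by simp [hp]; omega⟩

theorem hattedCycle_dist_le_sub (i j : Fin n) (hij : i ≤ j) (hj : j.val ≤ n - 2) :
    (hattedCycle n).dist i j ≤ j.val - i.val := by
  obtain ⟨p, hp⟩ := hattedCycle_exists_walk i j hij hj
  exact hp ▸ dist_le p

theorem hattedCycle_connected (h5 : 5 ≤ n) : (hattedCycle n).Connected := by
  have : Nonempty (Fin n) := ⟨⟨0, by omega⟩⟩
  have hreach : ∀ x : Fin n, (hattedCycle n).Reachable ⟨0, by omega⟩ x := by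
    intro x
    by_cases hx : x.val ≤ n - 2
    · obtain ⟨p, -⟩ := hattedCycle_exists_walk ⟨0, by omega⟩ x (Fin.le_def.mpr (Nat.zero_le _)) hx
      exact ⟨p⟩
    · exact (dist_eq_one_iff_adj.mp (hattedCycle_dist_eq_one h5 (by simp; omega))).reachable.symm
  exact ⟨fun x y => (hreach x).symm.trans (hreach y)⟩

theorem hattedCycle_dist_le_of_le (h5 : 5 ≤ n) {k : ℕ} (hk : n = 2 * k + 1) (i j : Fin n)
    (hij : i ≤ j) (hj : j.val ≤ n - 2) : (hattedCycle n).dist i j ≤ k := by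
  have hG := hattedCycle_connected h5
  let o : Fin n := ⟨0, by omega⟩
  let e : Fin n := ⟨n - 2, by omega⟩
  have hio : (hattedCycle n).dist i o ≤ i.val :=
    dist_comm.trans_le (hattedCycle_dist_le_sub o i (Fin.le_def.mpr (Nat.zero_le _)) (by omega))
  have hoe : (hattedCycle n).dist o e = 1 := hattedCycle_dist_eq_one h5 (by simp [o, e])
  have hej : (hattedCycle n).dist e j ≤ n - 2 - j.val :=
    dist_comm.trans_le (hattedCycle_dist_le_sub j e (Fin.le_def.mpr hj) le_rfl)
  have hwrap : (hattedCycle n).dist i j ≤ (hattedCycle n).dist i o + (hattedCycle n).dist o e +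
      (hattedCycle n).dist e j := hG.dist_triangle.trans (by gcongr; exact hG.dist_triangle)
  have := hattedCycle_dist_le_sub i j hij hj
  have := Fin.le_def.mp hij
  omega

theorem hattedCycle_dist_last_le (h5 : 5 ≤ n) {k : ℕ} (hk : n = 2 * k + 1) (i j : Fin n)
    (hi : i.val = n - 1) (hj : j.val ≤ n - 2) : (hattedCycle n).dist i j ≤ k := by
  have hG := hattedCycle_connected h5
  let o : Fin n := ⟨0, by omega⟩
  let t : Fin n := ⟨2, by omega⟩
  let e : Fin n := ⟨n - 2, by omega⟩
  have hio : (hattedCycle n).dist i o = 1 := hattedCycle_dist_eq_one h5 (by simp [o, hi])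
  have hit : (hattedCycle n).dist i t = 1 := hattedCycle_dist_eq_one h5 (by simp [t, hi])
  have hoe : (hattedCycle n).dist o e = 1 := hattedCycle_dist_eq_one h5 (by simp [o, e])
  have hoj : (hattedCycle n).dist o j ≤ j.val :=
    hattedCycle_dist_le_sub o j (Fin.le_def.mpr (Nat.zero_le _)) hj
  have hej : (hattedCycle n).dist e j ≤ n - 2 - j.val :=
    dist_comm.trans_le (hattedCycle_dist_le_sub j e (Fin.le_def.mpr hj) le_rfl)
  have hvia_o : (hattedCycle n).dist i j ≤ (hattedCycle n).dist i o + (hattedCycle n).dist o j :=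
    hG.dist_triangle
  have hwrap : (hattedCycle n).dist i j ≤ (hattedCycle n).dist i o + (hattedCycle n).dist o e +
      (hattedCycle n).dist e j := hG.dist_triangle.trans (by gcongr; exact hG.dist_triangle)
  by_cases h2 : 2 ≤ j.val
  · have htj : (hattedCycle n).dist t j ≤ j.val - 2 :=
      hattedCycle_dist_le_sub t j (Fin.le_def.mpr h2) hj
    have hvia_t : (hattedCycle n).dist i j ≤ (hattedCycle n).dist i t + (hattedCycle n).dist t j :=
      hG.dist_triangle
    omega
  · omega

theorem hattedCycle_dist_le (h5 : 5 ≤ n) {k : ℕ} (hk : n = 2 * k + 1) (x y : Fin n) :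
    (hattedCycle n).dist x y ≤ k := by
  wlog hxy : x ≤ y generalizing x y
  · rw [dist_comm]
    exact this y x (le_of_not_ge hxy)
  by_cases hy : y.val ≤ n - 2
  · exact hattedCycle_dist_le_of_le h5 hk x y hxy hy
  by_cases hx : x.val ≤ n - 2
  · rw [dist_comm]
    exact hattedCycle_dist_last_le h5 hk y x (by omega) hx
  · rw [show x = y from Fin.ext (by omega), dist_self]
    omega

theorem min_le_hattedCycle_dist (h5 : 5 ≤ n) (i j : Fin n) (hi : i.val = 0) :
    min j.val (n - 1 - j.val) ≤ (hattedCycle n).dist i j := by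
  -- a height that changes by at most one along edges: cycle distance from `0`, and `1` on the hat
  let f : Fin n → ℤ := fun x => if x.val = n - 1 then 1 else (min x.val (n - 1 - x.val) : ℕ)
  have hf : ∀ x y, (hattedCycle n).Adj x y → |f x - f y| ≤ 1 := by
    intro x y hxy
    obtain ⟨hne, hrel⟩ := hattedCycle_adj_iff.mp hxy
    have hne' : x.val ≠ y.val := fun h => hne (Fin.ext h)
    simp only [f, abs_le]
    split_ifs <;> omega
  have := abs_sub_le_dist f hf (hattedCycle_connected h5 i j)
  simp only [f, hi, abs_le] at this
  split_ifs at this <;> omega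

theorem two_mul_graphDiam_hattedCycle (h5 : 5 ≤ n) (hodd : Odd n) :
    2 * graphDiam (hattedCycle n) = n - 1 := by
  obtain ⟨k, hk⟩ := hodd
  have hle : graphDiam (hattedCycle n) ≤ k := graphDiam_le_iff.mpr (hattedCycle_dist_le h5 hk)
  have hge := (min_le_hattedCycle_dist h5 ⟨0, by omega⟩ ⟨k, by omega⟩ rfl).trans
    (dist_le_graphDiam _ _)
  simp only at hge
  omega

end HattedCycle

theorem sti_diam_bounds [Fintype V] (G : SimpleGraph V)
    (hSTI : IsSTI G) (hn : 5 ≤ Fintype.card V) :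
    (2 ≤ graphDiam G ∧ 2 * graphDiam G ≤ Fintype.card V - 1) ∧
    (graphDiam G = 2 ↔ Nonempty (G ≃g completeBipartiteGraph (Fin ((Fintype.card V - 1) / 2)) (Fin ((Fintype.card V + 1) / 2)))) ∧
    2 * graphDiam (hattedCycle (Fintype.card V)) = Fintype.card V - 1 := by
  have : Nontrivial V := Fintype.one_lt_card_iff_nontrivial.mp (by omega)
  refine ⟨⟨hSTI.two_le_graphDiam (by omega), hSTI.two_mul_graphDiam_le hn⟩,
    ⟨hSTI.nonempty_iso_of_graphDiam_eq_two, fun ⟨e⟩ => ?_⟩,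
    two_mul_graphDiam_hattedCycle hn hSTI.odd_card⟩
  have : Nonempty (Fin ((Fintype.card V - 1) / 2)) := ⟨⟨0, by omega⟩⟩
  have : Nonempty (Fin ((Fintype.card V + 1) / 2)) := ⟨⟨0, by omega⟩⟩
  exact le_antisymm (e.graphDiam_eq ▸ graphDiam_completeBipartiteGraph_le_two)
    (hSTI.two_le_graphDiam (by omega))
end

section
/- For every odd integer n ≥ 5, the Wiener index of the hatted cycle G_n equals (n³ − n² − n + 17)/8. -/
open Finset

variable {V : Type*}

/-- The Wiener index: the sum of distances over all unordered pairs of vertices. -/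
noncomputable def wiener [Fintype V] [DecidableEq V] (G : SimpleGraph V) : ℕ :=
  ∑ e : Sym2 V, Sym2.lift ⟨fun u v => G.dist u v, fun _ _ => SimpleGraph.dist_comm⟩ e

/-
The hat `n - 1` is a false twin of vertex `1`: both have neighbourhood `{0, 2}`. Identifying
the twins projects `G_n` onto the cycle `C_{n-1}`, and distances in `G_n` are the cycle distances
of the projections, except that the twins themselves are at distance `2`. Such a distance formula
is certified by a potential that is `1`-Lipschitz along edges and strictly decreases along some
edge out of every vertex other than the target. For `n = 2t + 1` every vertex of `C_{2t}` has
total distance `t²` to the others, so `2 W(G_n) = 2t · t² + 2 (t² + 2)`.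
-/

namespace SimpleGraph

variable {G : SimpleGraph V} {f : V → ℕ}

lemma Walk.le_add_length_of_lipschitz (hf : ∀ ⦃v w⦄, G.Adj v w → f v ≤ f w + 1) {u v : V}
    (p : G.Walk u v) : f u ≤ f v + p.length := by
  induction p with
  | nil => simp
  | cons h p ih => have := hf h; rw [Walk.length_cons]; omega

lemma exists_walk_length_le_of_descent {t : V} (hf : ∀ v ≠ t, ∃ w, G.Adj v w ∧ f w < f v)
    (v : V) : ∃ p : G.Walk v t, p.length ≤ f v := by
  induction hv : f v using Nat.strong_induction_on generalizing v with
  | _ k ih =>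
    by_cases hvt : v = t
    · subst hvt; exact ⟨Walk.nil, by simp⟩
    · obtain ⟨w, hvw, hw⟩ := hf v hvt
      obtain ⟨p, hp⟩ := ih (f w) (hv ▸ hw) w rfl
      exact ⟨Walk.cons hvw p, by rw [Walk.length_cons]; omega⟩

theorem dist_eq_of_lipschitz_of_descent {t : V} (ht : f t = 0)
    (hlip : ∀ ⦃v w⦄, G.Adj v w → f v ≤ f w + 1) (hdesc : ∀ v ≠ t, ∃ w, G.Adj v w ∧ f w < f v)
    (v : V) : G.dist v t = f v := by
  obtain ⟨p, hp⟩ := exists_walk_length_le_of_descent hdesc v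
  refine le_antisymm ((dist_le p).trans hp) ?_
  obtain ⟨q, hq⟩ := p.reachable.exists_walk_length_eq_dist
  simpa [ht, hq] using q.le_add_length_of_lipschitz hlip

end SimpleGraph

lemma Sym2.two_nsmul_sum_eq_sum_prod [Fintype V] [DecidableEq V] {M : Type*} [AddCommMonoid M]
    (f : Sym2 V → M) (hf : ∀ e, e.IsDiag → f e = 0) :
    2 • ∑ e, f e = ∑ p : V × V, f s(p.1, p.2) := by
  rw [Finset.sum_comp (g := fun p : V × V => s(p.1, p.2)),
    Finset.image_univ_of_surjective (f := fun p : V × V => s(p.1, p.2)) Sym2.mk_surjective,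
    Finset.smul_sum]
  refine Finset.sum_congr rfl fun e _ => ?_
  induction e with
  | _ a b =>
    by_cases hab : a = b
    · simp [hf, hab]
    · have : ({p | s(p.1, p.2) = s(a, b)} : Finset (V × V)) = {(a, b), (b, a)} := by
        ext ⟨x, y⟩; simp
      rw [this, Finset.card_pair (by simp [hab])]

lemma two_mul_wiener [Fintype V] [DecidableEq V] (G : SimpleGraph V) :
    2 * wiener G = ∑ u, ∑ v, G.dist u v := by
  rw [wiener, ← smul_eq_mul, Sym2.two_nsmul_sum_eq_sum_prod, Fintype.sum_prod_type]
  · rfl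
  · intro e he
    induction e with
    | _ a b => rw [Sym2.mk_isDiag_iff] at he; subst he; exact SimpleGraph.dist_self

def cycDist (m a b : ℕ) : ℕ := min (Nat.dist a b) (m - Nat.dist a b)

def cycSucc (m a : ℕ) : ℕ := if a + 1 = m then 0 else a + 1

def cycPred (m a : ℕ) : ℕ := if a = 0 then m - 1 else a - 1

section CycDist

variable {m a b c : ℕ}

lemma cycDist_comm (m a b : ℕ) : cycDist m a b = cycDist m b a := by
  simp only [cycDist, Nat.dist_comm]

lemma cycDist_self (m a : ℕ) : cycDist m a a = 0 := by
  simp [cycDist]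

lemma cycDist_triangle (ha : a < m) (hb : b < m) (hc : c < m) :
    cycDist m a c ≤ cycDist m a b + cycDist m b c := by
  simp only [cycDist, Nat.dist]; omega

lemma cycDist_cycSucc_left (ha : a < m) (hb : b < m) :
    cycDist m (cycSucc m a) b = cycDist m a (cycPred m b) := by
  simp only [cycDist, Nat.dist, cycSucc, cycPred]; split_ifs <;> omega

lemma exists_cycDist_eq_one_cycDist_lt (ha : a < m) (hb : b < m) (hab : a ≠ b) :
    ∃ c < m, cycDist m b c = 1 ∧ cycDist m a c < cycDist m a b := by
  by_cases h : cycDist m a (cycSucc m b) < cycDist m a b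
  · refine ⟨cycSucc m b, ?_, ?_, h⟩ <;> grind [cycDist, Nat.dist, cycSucc]
  · refine ⟨cycPred m b, ?_, ?_, ?_⟩ <;> grind [cycDist, Nat.dist, cycSucc, cycPred]

lemma sum_range_cycDist_cycSucc (ha : a < m) :
    ∑ b ∈ range m, cycDist m (cycSucc m a) b = ∑ b ∈ range m, cycDist m a b := by
  refine Finset.sum_nbij' (cycPred m) (cycSucc m) ?_ ?_ ?_ ?_
    fun b hb => cycDist_cycSucc_left ha (mem_range.mp hb) <;>
    simp only [mem_range, cycPred, cycSucc] <;> grind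

lemma sum_range_cycDist (ha : a < m) :
    ∑ b ∈ range m, cycDist m a b = ∑ b ∈ range m, cycDist m 0 b := by
  induction a with
  | zero => rfl
  | succ a ih =>
    have hsucc : cycSucc m a = a + 1 := if_neg (by omega)
    rw [← hsucc, sum_range_cycDist_cycSucc (by omega), ih (by omega)]

lemma sum_range_cycDist_zero_two_mul (t : ℕ) :
    ∑ b ∈ range (2 * t), cycDist (2 * t) 0 b = t * t := by
  have hantipodal : ∀ b ∈ range t, cycDist (2 * t) 0 b + cycDist (2 * t) 0 (t + b) = t := by
    intro b hb
    rw [mem_range] at hb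
    simp only [cycDist, Nat.dist]
    omega
  rw [two_mul, Finset.sum_range_add, ← Finset.sum_add_distrib, ← two_mul,
    Finset.sum_congr rfl hantipodal, Finset.sum_const, Finset.card_range, smul_eq_mul]

end CycDist

-- The projection of `G_n` onto the cycle on `0, …, n - 2`, sending the hat to its twin.
def hatProj (n a : ℕ) : ℕ := if a = n - 1 then 1 else a

def hatDist (n a b : ℕ) : ℕ :=
  if a ≠ b ∧ hatProj n a = hatProj n b then 2 else cycDist (n - 1) (hatProj n a) (hatProj n b)

section HattedCycle

variable {n : ℕ}

lemma hatProj_lt (hn : 3 ≤ n) {a : ℕ} (ha : a < n) : hatProj n a < n - 1 := by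
  unfold hatProj; split_ifs <;> omega

lemma hatProj_of_lt {a : ℕ} (ha : a < n - 1) : hatProj n a = a := if_neg ha.ne

lemma hatDist_self (n a : ℕ) : hatDist n a a = 0 := by
  simp [hatDist, cycDist_self]

lemma hatDist_comm (n a b : ℕ) : hatDist n a b = hatDist n b a := by
  unfold hatDist; rw [cycDist_comm]; grind

lemma hattedCycle_adj_iff_s18 (hn : 3 ≤ n) {u v : Fin n} :
    (hattedCycle n).Adj u v ↔ cycDist (n - 1) (hatProj n u) (hatProj n v) = 1 := by
  have := u.isLt
  have := v.isLt
  simp only [hattedCycle, SimpleGraph.fromRel_adj, ne_eq, Fin.ext_iff, cycDist, Nat.dist,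
    hatProj]
  split_ifs <;> omega

lemma hatDist_le_hatDist_add_one_of_adj (hn : 3 ≤ n) {u v : Fin n}
    (h : (hattedCycle n).Adj u v) {x : ℕ} (hx : x < n) :
    hatDist n u x ≤ hatDist n v x + 1 := by
  rw [hattedCycle_adj_iff_s18 hn] at h
  have htri := cycDist_triangle (hatProj_lt (by omega) u.isLt) (hatProj_lt (by omega) v.isLt)
    (hatProj_lt (by omega) hx)
  have hcomm := cycDist_comm (n - 1) (hatProj n u) (hatProj n v)
  unfold hatDist
  split_ifs <;> grind [cycDist_self]

lemma exists_adj_hatDist_lt (hn : 3 ≤ n) {u x : Fin n} (hux : u ≠ x) :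
    ∃ w, (hattedCycle n).Adj u w ∧ hatDist n w x < hatDist n u x := by
  simp only [hattedCycle_adj_iff_s18 hn]
  by_cases htwin : hatProj n u = hatProj n x
  -- `u` and `x` are the two twins, and `0` is adjacent to both.
  · refine ⟨⟨0, by omega⟩, ?_, ?_⟩ <;> grind [hatDist, hatProj, cycDist, Nat.dist]
  obtain ⟨c, hc, hcu, hcx⟩ := exists_cycDist_eq_one_cycDist_lt
    (hatProj_lt (by omega) x.isLt) (hatProj_lt (by omega) u.isLt) (Ne.symm htwin)
  have hdist : hatDist n u x = cycDist (n - 1) (hatProj n x) (hatProj n u) := by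
    rw [hatDist, if_neg (by tauto), cycDist_comm]
  -- Step along the cycle towards `x`; if the step lands on the projection of `x`, step to `x`.
  by_cases hcx' : c = hatProj n x
  · refine ⟨x, hcx' ▸ hcu, ?_⟩
    rw [hatDist_self, hdist]
    omega
  · refine ⟨⟨c, by omega⟩, by rwa [hatProj_of_lt hc], ?_⟩
    rwa [hdist, hatDist, hatProj_of_lt hc, if_neg (by tauto), cycDist_comm]

theorem hattedCycle_dist (hn : 3 ≤ n) (u v : Fin n) :
    (hattedCycle n).dist u v = hatDist n u v :=
  SimpleGraph.dist_eq_of_lipschitz_of_descent (f := fun w : Fin n => hatDist n w v)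
    (hatDist_self n v)
    (fun _ _ h => hatDist_le_hatDist_add_one_of_adj hn h v.isLt)
    (fun _ h => exists_adj_hatDist_lt hn h) u

end HattedCycle

section HatDistSum

variable {m a b : ℕ}

lemma hatDist_of_lt (ha : a < m) (hb : b < m) : hatDist (m + 1) a b = cycDist m a b := by
  simp [hatDist, hatProj, ha.ne, hb.ne]

lemma hatDist_last (hb : b < m) :
    hatDist (m + 1) m b = cycDist m 1 b + if b = 1 then 2 else 0 := by
  simp only [hatDist, hatProj, Nat.add_sub_cancel, if_neg hb.ne]
  split_ifs <;> grind [cycDist_self]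

lemma sum_range_hatDist_last {t : ℕ} (ht : 1 ≤ t) :
    ∑ b ∈ range (2 * t), hatDist (2 * t + 1) (2 * t) b = t * t + 2 := by
  rw [Finset.sum_congr rfl fun b hb => hatDist_last (mem_range.mp hb), Finset.sum_add_distrib,
    sum_range_cycDist (by omega), sum_range_cycDist_zero_two_mul, Finset.sum_ite_eq']
  simp only [mem_range, if_pos (show 1 < 2 * t by omega)]

theorem sum_range_sum_range_hatDist (t : ℕ) (ht : 1 ≤ t) :
    ∑ a ∈ range (2 * t + 1), ∑ b ∈ range (2 * t + 1), hatDist (2 * t + 1) a b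
      = 2 * (t + 1) * t * t + 4 := by
  have hrow : ∀ a ∈ range (2 * t), ∑ b ∈ range (2 * t), hatDist (2 * t + 1) a b = t * t := by
    intro a ha
    rw [mem_range] at ha
    rw [Finset.sum_congr rfl fun b hb => hatDist_of_lt ha (mem_range.mp hb),
      sum_range_cycDist ha, sum_range_cycDist_zero_two_mul]
  have hhat := sum_range_hatDist_last ht
  simp only [Finset.sum_range_succ, Finset.sum_add_distrib, Finset.sum_congr rfl hrow, hhat,
    hatDist_self]
  rw [Finset.sum_congr rfl fun a _ => hatDist_comm _ a _, hhat]
  simp only [Finset.sum_const, Finset.card_range, smul_eq_mul]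
  ring

end HatDistSum

lemma two_mul_wiener_hattedCycle {t : ℕ} (ht : 1 ≤ t) :
    2 * wiener (hattedCycle (2 * t + 1)) = 2 * (t + 1) * t * t + 4 := by
  rw [two_mul_wiener, ← sum_range_sum_range_hatDist t ht]
  simp only [hattedCycle_dist (n := 2 * t + 1) (by omega)]
  rw [← Fin.sum_univ_eq_sum_range]
  simp only [← Fin.sum_univ_eq_sum_range (hatDist _ _)]

theorem hattedCycle_wiener (n : ℕ) (hn : 5 ≤ n) (hodd : Odd n) :
    8 * (wiener (hattedCycle n) : ℤ) = (n : ℤ) ^ 3 - (n : ℤ) ^ 2 - (n : ℤ) + 17 := by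
  obtain ⟨t, rfl⟩ := hodd
  have h2W := congrArg (Nat.cast : ℕ → ℤ) (two_mul_wiener_hattedCycle (t := t) (by omega))
  push_cast at h2W ⊢
  linear_combination 4 * h2W
end
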